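/- arXiv:1901.01058 — 6 statements merged into one kernel-verified Lean document; each statement's English description precedes it below -/
import Mathlib

section
/- Let q, q̄ be prime powers and t, t̄ ≥ 1 integers. If q^t > q̄^t̄, then there is no graph homomorphism from the q-Kneser graph qK_{2t:t} to the q̄-Kneser graph q̄K_{2t̄:t̄}. -/
/-!
Over a degree-`t` extension `K` of `F`, the space `F^{2t}` becomes `K²`, and its `q^t + 1`
lines through the origin are `t`-dimensional `F`-subspaces meeting pairwise trivially: a clique
of `qK_{2t:t}`. A homomorphism carries it to a clique of `q̄K_{2t̄:t̄}`, but members of such a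
clique have pairwise disjoint sets of nonzero vectors, so it has at most
`(q̄^{2t̄} - 1) / (q̄^{t̄} - 1) = q̄^{t̄} + 1` members.
-/

/-- The `q`-Kneser graph `qK_{n:m}`: vertices are the `m`-dimensional subspaces of
`F^n`, two distinct subspaces being adjacent iff they intersect trivially. -/
def qKneserGraph (F : Type*) [Field F] (n m : ℕ) :
    SimpleGraph {W : Submodule F (Fin n → F) // Module.finrank F W = m} :=
  SimpleGraph.fromRel (fun W W' => W.1 ⊓ W'.1 = ⊥)

open Module Function

theorem Submodule.sum_natCard_sub_one_le_of_pairwise_disjoint {R V ι : Type*} [Ring R]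
    [AddCommGroup V] [Module R V] [Finite V] [Fintype ι] {W : ι → Submodule R V}
    (hW : Pairwise (Disjoint on W)) :
    ∑ i, (Nat.card (W i) - 1) ≤ Nat.card V - 1 := by
  classical
  have : Fintype V := Fintype.ofFinite V
  let e : (Σ i, {v : W i // v ≠ 0}) → {v : V // v ≠ 0} :=
    fun x => ⟨x.2.1, by simpa using x.2.2⟩
  have he : e.Injective := by
    rintro ⟨i, ⟨v, hvi⟩, hv⟩ ⟨j, ⟨w, hwj⟩, hw⟩ h
    obtain rfl : v = w := congrArg Subtype.val h
    obtain rfl : i = j := by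
      by_contra hij
      exact hv (Subtype.ext ((Submodule.disjoint_def.1 (hW hij)) v hvi hwj))
    rfl
  have := Nat.card_le_card_of_injective e he
  simpa [Nat.card_sigma, Nat.card_eq_fintype_card, Fintype.card_subtype_compl] using this

/-- The points of the projective line over `K`, as vectors of `K × K`. -/
def projLineRep {K : Type*} [Field K] : Option K → K × K
  | none => (0, 1)
  | some a => (1, a)

theorem projLineRep_ne_zero {K : Type*} [Field K] (o : Option K) : projLineRep o ≠ 0 := by
  cases o <;> simp [projLineRep]

theorem pairwise_disjoint_span_projLineRep (K : Type*) [Field K] :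
    Pairwise (Disjoint on fun o : Option K => K ∙ projLineRep o) := by
  intro i j hij
  change Disjoint _ _
  rw [Submodule.disjoint_span_singleton, Submodule.mem_span_singleton]
  rintro ⟨c, hc⟩
  cases i <;> cases j <;> simp_all [projLineRep, Prod.ext_iff] <;>
    obtain ⟨rfl, h⟩ := hc <;> simp_all

namespace qKneserGraph

variable {F : Type*} [Field F] {n m : ℕ}

theorem disjoint_of_adj {W W' : {W : Submodule F (Fin n → F) // finrank F W = m}}
    (h : (qKneserGraph F n m).Adj W W') : Disjoint W.1 W'.1 := by
  rw [qKneserGraph, SimpleGraph.fromRel_adj] at h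
  rcases h.2 with h | h
  · exact disjoint_iff.2 h
  · exact (disjoint_iff.2 h).symm

theorem adj_of_disjoint (hm : m ≠ 0) {W W' : {W : Submodule F (Fin n → F) // finrank F W = m}}
    (h : Disjoint W.1 W'.1) : (qKneserGraph F n m).Adj W W' := by
  refine ⟨fun hWW' => hm ?_, Or.inl (disjoint_iff.1 h)⟩
  subst hWW'
  rw [← W.2, disjoint_self.1 h, finrank_bot]

theorem natCard_mul_le_of_top_hom [Finite F] {ι : Type*} [Finite ι]
    (f : (⊤ : SimpleGraph ι) →g qKneserGraph F n m) :
    Nat.card ι * (Nat.card F ^ m - 1) ≤ Nat.card F ^ n - 1 := by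
  have : Fintype ι := Fintype.ofFinite ι
  have hdisj : Pairwise (Disjoint on fun i => (f i).1) := fun i j hij =>
    disjoint_of_adj (f.map_adj hij)
  have hcard : ∀ i, Nat.card (f i).1 = Nat.card F ^ m := fun i => by
    rw [natCard_eq_pow_finrank (K := F), (f i).2]
  have := Submodule.sum_natCard_sub_one_le_of_pairwise_disjoint hdisj
  simp only [hcard, Finset.sum_const, Finset.card_univ, smul_eq_mul] at this
  rwa [← Nat.card_eq_fintype_card, natCard_eq_pow_finrank (K := F) (V := Fin n → F),
    finrank_fin_fun] at this

theorem natCard_le_of_top_hom [Finite F] {ι : Type*} [Finite ι]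
    (f : (⊤ : SimpleGraph ι) →g qKneserGraph F (2 * m) m) (hm : m ≠ 0) :
    Nat.card ι ≤ Nat.card F ^ m + 1 := by
  have hQ : 1 < Nat.card F ^ m := Nat.one_lt_pow hm Finite.one_lt_card
  have h := natCard_mul_le_of_top_hom f
  rw [pow_mul', ← one_pow 2, Nat.sq_sub_sq, one_pow] at h
  exact Nat.le_of_mul_le_mul_right h (Nat.sub_pos_of_lt hQ)

theorem nonempty_top_hom_of_finrank (F K : Type*) [Field F] [Field K] [Algebra F K]
    [FiniteDimensional F K] :
    Nonempty ((⊤ : SimpleGraph (Option K)) →g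
      qKneserGraph F (2 * finrank F K) (finrank F K)) := by
  let ε : (K × K) ≃ₗ[F] (Fin (2 * finrank F K) → F) :=
    LinearEquiv.ofFinrankEq _ _ (by rw [finrank_prod, finrank_fin_fun, two_mul])
  let W (o : Option K) : Submodule F (Fin (2 * finrank F K) → F) :=
    ((K ∙ projLineRep o).restrictScalars F).map (ε : (K × K) →ₗ[F] _)
  have hW : ∀ o, finrank F (W o) = finrank F K := fun o => by
    have hline : finrank K ((K ∙ projLineRep o).restrictScalars F) = 1 :=
      finrank_span_singleton (projLineRep_ne_zero o)
    rw [LinearEquiv.finrank_map_eq, ← finrank_mul_finrank F K, hline, mul_one]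
  refine ⟨⟨fun o => ⟨W o, hW o⟩, fun {i j} hij => adj_of_disjoint finrank_pos.ne' ?_⟩⟩
  exact Submodule.disjoint_map ε.injective
    ((Submodule.disjoint_restrictScalars_iff F).2 (pairwise_disjoint_span_projLineRep K hij))

end qKneserGraph

theorem stmt_2_general (q qbar t tbar : ℕ)
    (ht : 1 ≤ t) (htbar : 1 ≤ tbar)
    (F Fbar : Type*) [Field F] [Fintype F] [Field Fbar] [Fintype Fbar]
    (hF : Fintype.card F = q) (hFbar : Fintype.card Fbar = qbar)
    (hgt : qbar ^ tbar < q ^ t) :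
    IsEmpty (qKneserGraph F (2 * t) t →g qKneserGraph Fbar (2 * tbar) tbar) := by
  refine ⟨fun f => ?_⟩
  have : Fact (ringChar F).Prime := ⟨CharP.char_is_prime F _⟩
  have : NeZero t := ⟨by omega⟩
  let K := FiniteField.Extension F (ringChar F) t
  obtain ⟨g⟩ : Nonempty ((⊤ : SimpleGraph (Option K)) →g qKneserGraph F (2 * t) t) :=
    FiniteField.finrank_extension F (ringChar F) t ▸
      qKneserGraph.nonempty_top_hom_of_finrank F K
  have hclique := qKneserGraph.natCard_le_of_top_hom (f.comp g) (by omega)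
  rw [Finite.card_option, FiniteField.natCard_extension, Nat.card_eq_fintype_card,
    Nat.card_eq_fintype_card, hF, hFbar] at hclique
  omega

/-- If `q^t > q̄^t̄` then there is no graph homomorphism from `qK_{2t:t}`
to `q̄K_{2t̄:t̄}`. -/
theorem stmt_2 (q qbar t tbar : ℕ) (hq : IsPrimePow q) (hqbar : IsPrimePow qbar)
    (ht : 1 ≤ t) (htbar : 1 ≤ tbar)
    (F Fbar : Type*) [Field F] [Fintype F] [Field Fbar] [Fintype Fbar]
    (hF : Fintype.card F = q) (hFbar : Fintype.card Fbar = qbar)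
    (hgt : qbar ^ tbar < q ^ t) :
    IsEmpty (qKneserGraph F (2 * t) t →g qKneserGraph Fbar (2 * tbar) tbar) :=
  stmt_2_general q qbar t tbar ht htbar F Fbar hF hFbar hgt
end

section
/- Let q be a prime power, F a finite field with |F| = q, and let t, h, α be positive integers with 2 ≤ α ≤ h. Let C be a (t;h,α)_q-independent configuration, i.e., a set of t-dimensional F-subspaces of V = F^(ht) such that for any α distinct members V_{i₁}, ..., V_{i_α} of C one has dim(V_{i₁} + V_{i₂} + ... + V_{i_α}) = αt. Then |C| ≤ (q^((h-α+2)t) - 1)/(q^t - 1) + α - 2. -/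
/-!
Any `α` members of the configuration are independent, hence so is every subfamily of at most
`α` members. Fix `α - 2` members with sum `U`. In `V ⧸ U`, of dimension `ht - (α - 2)t`, the
images of the remaining members are `t`-dimensional (each member meets `U` trivially) and
pairwise intersect trivially (any two of them together with `U` are independent). Their nonzero
vectors are therefore disjoint, so they number at most `(q^((h-α+2)t) - 1) / (q^t - 1)`.
-/

open Module

namespace Submodule

section FinsetSup

variable {K V : Type*} [DivisionRing K] [AddCommGroup V] [Module K V] [FiniteDimensional K V]

theorem finrank_finsetSup_le_sum (s : Finset (Submodule K V)) :
    finrank K ↥(s.sup id) ≤ ∑ W ∈ s, finrank K W := by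
  induction s using Finset.cons_induction with
  | empty => simp
  | cons W s hW ih =>
    rw [Finset.sup_cons, Finset.sum_cons]
    exact (finrank_add_le_finrank_add_finrank W _).trans (by simpa using ih)

theorem finrank_finsetSup_eq_sum_of_subset {s u : Finset (Submodule K V)} (hsu : s ⊆ u)
    (hu : finrank K ↥(u.sup id) = ∑ W ∈ u, finrank K W) :
    finrank K ↥(s.sup id) = ∑ W ∈ s, finrank K W := by
  classical
  refine (finrank_finsetSup_le_sum s).antisymm ?_
  have hsplit :
      finrank K ↥(u.sup id) ≤ finrank K ↥(s.sup id) + finrank K ↥((u \ s).sup id) := by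
    rw [← Finset.union_sdiff_of_subset hsu, Finset.sup_union, Finset.union_sdiff_of_subset hsu]
    exact finrank_add_le_finrank_add_finrank _ _
  have := finrank_finsetSup_le_sum (u \ s)
  rw [← Finset.sum_sdiff hsu] at hu
  omega

theorem disjoint_finsetSup_erase_of_finrank_eq_sum {u : Finset (Submodule K V)}
    (hu : finrank K ↥(u.sup id) = ∑ W ∈ u, finrank K W) {W : Submodule K V} (hW : W ∈ u) :
    Disjoint W ((u.erase W).sup id) := by
  classical
  have hsup : finrank K ↥(W ⊔ (u.erase W).sup id) =
      finrank K W + finrank K ↥((u.erase W).sup id) := by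
    have h1 := finrank_finsetSup_le_sum (u.erase W)
    have h2 := finrank_add_le_finrank_add_finrank W ((u.erase W).sup id)
    rw [← Finset.insert_erase hW, Finset.sup_insert,
      Finset.sum_insert (Finset.notMem_erase W u)] at hu
    simp only [id] at hu
    omega
  have := finrank_sup_add_finrank_inf_eq W ((u.erase W).sup id)
  rw [disjoint_iff, ← finrank_eq_zero]
  omega

end FinsetSup

section Quotient

variable {K V : Type*} [DivisionRing K] [AddCommGroup V] [Module K V]

theorem finrank_map_mkQ_of_disjoint {W U : Submodule K V} (h : Disjoint W U) :
    finrank K ↥(W.map U.mkQ) = finrank K W := by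
  rw [← LinearMap.range_domRestrict]
  refine LinearMap.finrank_range_of_inj ?_
  rw [← LinearMap.ker_eq_bot, LinearMap.ker_domRestrict, ker_mkQ, ← disjoint_iff_comap_eq_bot]
  exact h

theorem disjoint_map_mkQ_of_disjoint_sup {W W' U : Submodule K V} (h : Disjoint W (W' ⊔ U)) :
    Disjoint (W.map U.mkQ) (W'.map U.mkQ) :=
  (disjoint_map_of_ker_le_right h (by simp)).mono_right (map_mono le_sup_left)

end Quotient

theorem sum_natCard_sub_one_le_of_pairwiseDisjoint {R M ι : Type*} [Ring R] [AddCommGroup M]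
    [Module R M] [Finite M] (s : Finset ι) (W : ι → Submodule R M)
    (hW : (s : Set ι).PairwiseDisjoint W) :
    ∑ i ∈ s, (Nat.card (W i) - 1) ≤ Nat.card M - 1 := by
  classical
  have := Fintype.ofFinite M
  let punctured : ι → Finset M := fun i => (Finset.univ.filter (· ∈ W i)).erase 0
  have hcard : ∀ i, (punctured i).card = Nat.card (W i) - 1 := by
    intro i
    rw [Finset.card_erase_of_mem (by simp), Nat.card_eq_fintype_card, Fintype.card_subtype]
  have hdisj : (s : Set ι).PairwiseDisjoint punctured := by
    intro i hi j hj hij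
    refine Finset.disjoint_left.mpr fun x hxi hxj => ?_
    simp only [punctured, Finset.mem_erase, Finset.mem_filter] at hxi hxj
    exact hxi.1 ((disjoint_def.mp (hW hi hj hij)) x hxi.2.2 hxj.2.2)
  calc ∑ i ∈ s, (Nat.card (W i) - 1) = (s.biUnion punctured).card := by
        rw [Finset.card_biUnion hdisj]; simp only [hcard]
    _ ≤ (Finset.univ.erase (0 : M)).card := Finset.card_le_card fun x hx => by
        obtain ⟨i, -, hx⟩ := Finset.mem_biUnion.mp hx
        exact Finset.mem_erase.mpr ⟨(Finset.mem_erase.mp hx).1, Finset.mem_univ x⟩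
    _ = Nat.card M - 1 := by
        rw [Finset.card_erase_of_mem (Finset.mem_univ _), Finset.card_univ,
          Nat.card_eq_fintype_card]

theorem card_mul_pow_sub_one_le_of_pairwiseDisjoint {K V ι : Type*} [DivisionRing K] [Finite K]
    [AddCommGroup V] [Module K V] [Module.Finite K V] {t : ℕ} (s : Finset ι)
    (W : ι → Submodule K V) (hW : (s : Set ι).PairwiseDisjoint W)
    (hdim : ∀ i ∈ s, finrank K (W i) = t) :
    s.card * (Nat.card K ^ t - 1) ≤ Nat.card K ^ finrank K V - 1 := by
  have := Module.finite_of_finite K (M := V)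
  have := sum_natCard_sub_one_le_of_pairwiseDisjoint s W hW
  rwa [natCard_eq_pow_finrank (K := K), Finset.sum_congr rfl fun i hi => by
    rw [natCard_eq_pow_finrank (K := K), hdim i hi], Finset.sum_const, smul_eq_mul] at this

section IndependentConfiguration

variable {K V : Type*} [DivisionRing K] [AddCommGroup V] [Module K V]

structure IsIndependentConfiguration (C : Finset (Submodule K V)) (t α : ℕ) : Prop where
  finrank_eq : ∀ W ∈ C, finrank K W = t
  finrank_finsetSup_eq : ∀ s ⊆ C, s.card = α → finrank K ↥(s.sup id) = α * t

namespace IsIndependentConfiguration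

variable [FiniteDimensional K V] {C : Finset (Submodule K V)} {t α : ℕ}

theorem finrank_finsetSup_eq_sum (hC : IsIndependentConfiguration C t α) (hαC : α ≤ C.card)
    {s : Finset (Submodule K V)} (hsC : s ⊆ C) (hsα : s.card ≤ α) :
    finrank K ↥(s.sup id) = ∑ W ∈ s, finrank K W := by
  obtain ⟨u, hsu, huC, hu⟩ := Finset.exists_subsuperset_card_eq hsC hsα hαC
  refine finrank_finsetSup_eq_sum_of_subset hsu ?_
  rw [hC.finrank_finsetSup_eq u huC hu, Finset.sum_congr rfl fun W hW => hC.finrank_eq W (huC hW),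
    Finset.sum_const, hu, smul_eq_mul]

theorem disjoint_finsetSup (hC : IsIndependentConfiguration C t α) (hαC : α ≤ C.card)
    {s : Finset (Submodule K V)} (hsC : s ⊆ C) (hsα : s.card < α)
    {W : Submodule K V} (hW : W ∈ C) (hWs : W ∉ s) :
    Disjoint W (s.sup id) := by
  classical
  have hu := hC.finrank_finsetSup_eq_sum hαC (Finset.insert_subset hW hsC)
    ((Finset.card_insert_le W s).trans hsα)
  simpa [Finset.erase_insert hWs] using
    disjoint_finsetSup_erase_of_finrank_eq_sum hu (Finset.mem_insert_self W s)

theorem card_sub_mul_pow_sub_one_le [Finite K] (hC : IsIndependentConfiguration C t α)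
    (hα : 2 ≤ α) (hαC : α ≤ C.card) :
    (C.card - (α - 2)) * (Nat.card K ^ t - 1) ≤
      Nat.card K ^ (finrank K V - (α - 2) * t) - 1 := by
  classical
  obtain ⟨s₀, hs₀C, hs₀⟩ := Finset.exists_subset_card_eq (show α - 2 ≤ C.card by omega)
  set U := s₀.sup id
  have hU : finrank K U = (α - 2) * t := by
    rw [hC.finrank_finsetSup_eq_sum hαC hs₀C (by omega),
      Finset.sum_congr rfl fun W hW => hC.finrank_eq W (hs₀C hW), Finset.sum_const, hs₀,
      smul_eq_mul]
  have hdisjoint :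
      ((C \ s₀ : Finset _) : Set _).PairwiseDisjoint fun W : Submodule K V => W.map U.mkQ := by
    intro W hW W' hW' hne
    simp only [Finset.coe_sdiff, Set.mem_sdiff, Finset.mem_coe] at hW hW'
    have hsplit := hC.disjoint_finsetSup hαC (Finset.insert_subset hW'.1 hs₀C)
      ((Finset.card_insert_le W' s₀).trans_lt (by omega)) hW.1 (by simpa [hne] using hW.2)
    rw [Finset.sup_insert] at hsplit
    exact disjoint_map_mkQ_of_disjoint_sup hsplit
  have himage : ∀ W ∈ C \ s₀, finrank K (W.map U.mkQ) = t := by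
    intro W hW
    rw [Finset.mem_sdiff] at hW
    rw [finrank_map_mkQ_of_disjoint (hC.disjoint_finsetSup hαC hs₀C (by omega) hW.1 hW.2),
      hC.finrank_eq W hW.1]
  have := card_mul_pow_sub_one_le_of_pairwiseDisjoint _ _ hdisjoint himage
  rwa [Finset.card_sdiff_of_subset hs₀C, hs₀, finrank_quotient, hU] at this

end IsIndependentConfiguration

end IndependentConfiguration

end Submodule

open Submodule in
theorem stmt_7_general (q t h α : ℕ) (ht : 1 ≤ t)
    (hα : 2 ≤ α)
    (F : Type*) [Field F] [Fintype F] (hF : Fintype.card F = q)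
    (C : Finset (Submodule F (Fin (h * t) → F)))
    (hdim : ∀ W ∈ C, Module.finrank F W = t)
    (hIC : ∀ s ⊆ C, s.card = α → Module.finrank F ↥(s.sup id) = α * t) :
    C.card ≤ (q ^ ((h - α + 2) * t) - 1) / (q ^ t - 1) + α - 2 := by
  have hq : 1 < q := hF ▸ Fintype.one_lt_card
  have hqt : 1 < q ^ t := Nat.one_lt_pow (by omega) hq
  have hqpow : q ^ t ≤ q ^ ((h - α + 2) * t) :=
    Nat.pow_le_pow_right (by omega) (Nat.le_mul_of_pos_left t (by omega))
  have hquot : 1 ≤ (q ^ ((h - α + 2) * t) - 1) / (q ^ t - 1) :=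
    (Nat.one_le_div_iff (by omega)).mpr (by omega)
  rcases lt_or_ge C.card α with hCα | hαC
  · omega
  have hcodim : h * t - (α - 2) * t ≤ (h - α + 2) * t := by
    rw [← Nat.sub_mul]; exact Nat.mul_le_mul_right t (by omega)
  have hspread := IsIndependentConfiguration.card_sub_mul_pow_sub_one_le ⟨hdim, hIC⟩ hα hαC
  rw [Nat.card_eq_fintype_card, hF, finrank_fin_fun] at hspread
  have := Nat.pow_le_pow_right (by omega : 0 < q) hcodim
  have := (Nat.le_div_iff_mul_le (by omega)).mpr (hspread.trans (by omega :
    q ^ (h * t - (α - 2) * t) - 1 ≤ q ^ ((h - α + 2) * t) - 1))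
  omega

/-- Size bound for a `(t;h,α)_q`-independent configuration: a set `C` of
`t`-dimensional subspaces of `F^(ht)` such that any `α` distinct members have sum of
dimension exactly `αt` satisfies `|C| ≤ (q^((h-α+2)t) - 1)/(q^t - 1) + α - 2`. -/
theorem stmt_7 (q t h α : ℕ) (hq : IsPrimePow q) (ht : 1 ≤ t)
    (hα : 2 ≤ α) (hαh : α ≤ h)
    (F : Type*) [Field F] [Fintype F] (hF : Fintype.card F = q)
    (C : Finset (Submodule F (Fin (h * t) → F)))
    (hdim : ∀ W ∈ C, Module.finrank F W = t)
    (hIC : ∀ s ⊆ C, s.card = α → Module.finrank F ↥(s.sup id) = α * t) :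
    C.card ≤ (q ^ ((h - α + 2) * t) - 1) / (q ^ t - 1) + α - 2 :=
  stmt_7_general q t h α ht hα F hF C hdim hIC
end

section
/- Let q be a real number with q ≥ 1, and let h ≥ 2, t ≥ 1, and i be integers with 1 ≤ i ≤ h - 1. Then (q^t + q^(t-1)/(h-1))^i ≤ Σ_{j=0}^{i} q^(t·i - j). -/
/-!
Expand `(q^t + q^(t-1)/(h-1))^i` binomially: the `j`-th term is `q^(t·i-j) · C(i,j)/(h-1)^j`,
and `C(i,j) ≤ i^j ≤ (h-1)^j` because `i ≤ h - 1`, so each term is at most `q^(t·i-j)`.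
-/

open Finset

lemma choose_div_pow_le_one {c : ℝ} {i : ℕ} (hic : (i : ℝ) ≤ c) (j : ℕ) :
    (i.choose j : ℝ) / c ^ j ≤ 1 := by
  have hc : 0 ≤ c := (Nat.cast_nonneg i).trans hic
  refine div_le_one_of_le₀ ?_ (pow_nonneg hc j)
  calc (i.choose j : ℝ) ≤ (i : ℝ) ^ j := by exact_mod_cast Nat.choose_le_pow i j
    _ ≤ c ^ j := pow_le_pow_left₀ (Nat.cast_nonneg i) hic j

lemma add_div_pow_le_sum_pow_mul_pow {x y c : ℝ} {i : ℕ} (hx : 0 ≤ x) (hy : 0 ≤ y)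
    (hic : (i : ℝ) ≤ c) :
    (x + y / c) ^ i ≤ ∑ j ∈ range (i + 1), x ^ (i - j) * y ^ j := by
  rw [add_comm, add_pow]
  refine sum_le_sum fun j _ => ?_
  calc (y / c) ^ j * x ^ (i - j) * (i.choose j : ℝ)
      = x ^ (i - j) * y ^ j * ((i.choose j : ℝ) / c ^ j) := by rw [div_pow]; ring
    _ ≤ x ^ (i - j) * y ^ j :=
      mul_le_of_le_one_right (by positivity) (choose_div_pow_le_one hic j)

lemma Nat.mul_sub_add_sub_one_mul {i j : ℕ} (hj : j ≤ i) (t : ℕ) :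
    t * (i - j) + (t - 1) * j = t * i - j := by
  obtain ⟨k, rfl⟩ := Nat.exists_eq_add_of_le hj
  cases t with
  | zero => simp
  | succ s => simp only [Nat.add_sub_cancel_left, Nat.add_sub_cancel]; ring_nf; omega

theorem stmt_8_general (q : ℝ) (hq : 1 ≤ q) (h t i : ℕ) (hh : 2 ≤ h)
    (hi2 : i ≤ h - 1) :
    (q ^ t + q ^ (t - 1) / ((h : ℝ) - 1)) ^ i ≤
      ∑ j ∈ Finset.range (i + 1), q ^ (t * i - j) := by
  have hq0 : 0 ≤ q := zero_le_one.trans hq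
  have hih : (i : ℝ) ≤ (h : ℝ) - 1 := by
    rw [← Nat.cast_one, ← Nat.cast_sub (by omega)]
    exact_mod_cast hi2
  refine (add_div_pow_le_sum_pow_mul_pow (pow_nonneg hq0 t) (pow_nonneg hq0 (t - 1)) hih).trans
    (le_of_eq (sum_congr rfl fun j hj => ?_))
  rw [← pow_mul, ← pow_mul, ← pow_add,
    Nat.mul_sub_add_sub_one_mul (Nat.lt_succ_iff.mp (mem_range.mp hj))]

/-- For real `q ≥ 1` and integers `h ≥ 2`, `t ≥ 1`, `1 ≤ i ≤ h - 1`: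
`(q^t + q^(t-1)/(h-1))^i ≤ Σ_{j=0}^{i} q^(t·i - j)`. -/
theorem stmt_8 (q : ℝ) (hq : 1 ≤ q) (h t i : ℕ) (hh : 2 ≤ h) (ht : 1 ≤ t)
    (hi1 : 1 ≤ i) (hi2 : i ≤ h - 1) :
    (q ^ t + q ^ (t - 1) / ((h : ℝ) - 1)) ^ i ≤
      ∑ j ∈ Finset.range (i + 1), q ^ (t * i - j) :=
  stmt_8_general q hq h t i hh hi2
end

section
/- Let q be a real number with q ≥ 1, and let h ≥ 3, t ≥ 1, and i be integers with 1 ≤ i ≤ h - 1. Then (q^t + q^(t-1)/(h-1)²)^i ≤ q^(t·i) + q^(t·i - 1). -/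
/-! Writing `m = h - 1` and `a = q⁻¹ / m²`, the left side is `q^(t i) (1 + a)^i` and the right
side is `q^(t i) (1 + q⁻¹)`. Bernoulli's inequality for `-a` gives
`(1 + a)^n (1 - n a) ≤ (1 - a²)^n ≤ 1`, hence `(1 + a)^n ≤ 1 + 2 n a` as long as `2 n a ≤ 1`;
and `2 i a ≤ q⁻¹` because `2 i ≤ 2 m ≤ m²`. -/

section Bernoulli

variable {R : Type*} [Field R] [LinearOrder R] [IsStrictOrderedRing R]

theorem pow_one_add_mul_one_sub_mul_le_one {a : R} (ha₀ : 0 ≤ a) (ha₁ : a ≤ 1) (n : ℕ) :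
    (1 + a) ^ n * (1 - n * a) ≤ 1 :=
  calc (1 + a) ^ n * (1 - n * a)
      ≤ (1 + a) ^ n * (1 - a) ^ n := by
        gcongr
        simpa [sub_eq_add_neg] using one_add_mul_le_pow (a := -a) (by linarith) n
    _ = (1 - a ^ 2) ^ n := by rw [← mul_pow]; ring
    _ ≤ 1 := pow_le_one₀ (by nlinarith) (by nlinarith)

theorem pow_one_add_le_one_add_two_mul {a : R} (ha : 0 ≤ a) {n : ℕ} (hna : 2 * n * a ≤ 1) :
    (1 + a) ^ n ≤ 1 + 2 * n * a := by
  rcases Nat.eq_zero_or_pos n with rfl | hn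
  · simp
  have hn₁ : (1 : R) ≤ n := by exact_mod_cast hn
  have ha₁ : a ≤ 1 := by nlinarith
  have hpos : 0 < 1 - n * a := by linarith
  refine le_of_mul_le_mul_right ?_ hpos
  calc (1 + a) ^ n * (1 - n * a) ≤ 1 := pow_one_add_mul_one_sub_mul_le_one ha ha₁ n
    _ ≤ (1 + 2 * n * a) * (1 - n * a) := by
      nlinarith [mul_nonneg ha (Nat.cast_nonneg (α := R) n)]

end Bernoulli

/-- For real `q ≥ 1` and integers `h ≥ 3`, `t ≥ 1`, `1 ≤ i ≤ h - 1`: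
`(q^t + q^(t-1)/(h-1)²)^i ≤ q^(t·i) + q^(t·i - 1)`. -/
theorem stmt_10 (q : ℝ) (hq : 1 ≤ q) (h t i : ℕ) (hh : 3 ≤ h) (ht : 1 ≤ t)
    (hi1 : 1 ≤ i) (hi2 : i ≤ h - 1) :
    (q ^ t + q ^ (t - 1) / ((h : ℝ) - 1) ^ 2) ^ i ≤
      q ^ (t * i) + q ^ (t * i - 1) := by
  have hq₀ : q ≠ 0 := by positivity
  set m : ℝ := (h : ℝ) - 1
  have hm : 2 ≤ m := by
    have : (3 : ℝ) ≤ h := by exact_mod_cast hh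
    linarith
  have him : (i : ℝ) ≤ m := by
    have : (i : ℝ) + 1 ≤ h := by exact_mod_cast (by omega : i + 1 ≤ h)
    linarith
  set a : ℝ := q⁻¹ / m ^ 2
  have hlhs : q ^ t + q ^ (t - 1) / m ^ 2 = q ^ t * (1 + a) := by
    rw [pow_sub₀ q hq₀ ht, pow_one]; ring
  have hrhs : q ^ (t * i) + q ^ (t * i - 1) = q ^ (t * i) * (1 + q⁻¹) := by
    rw [pow_sub₀ q hq₀ (Nat.one_le_iff_ne_zero.mpr (by positivity)), pow_one]; ring
  have hqinv : q⁻¹ ≤ 1 := inv_le_one_of_one_le₀ hq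
  have hia : 2 * i * a ≤ q⁻¹ := by
    have : 2 * (i : ℝ) ≤ m ^ 2 := by nlinarith
    calc 2 * i * a = q⁻¹ * (2 * i / m ^ 2) := by ring
      _ ≤ q⁻¹ * 1 := by gcongr; exact div_le_one_of_le₀ this (by positivity)
      _ = q⁻¹ := mul_one _
  rw [hlhs, hrhs, mul_pow, ← pow_mul]
  gcongr
  calc (1 + a) ^ i
      ≤ 1 + 2 * i * a := pow_one_add_le_one_add_two_mul (by positivity) (hia.trans hqinv)
    _ ≤ 1 + q⁻¹ := by linarith
end

section
/- Let q be a real number with q ≥ 2 (in the paper, a prime power), and let h ≥ 3 and t ≥ 2 be integers. Then Σ_{i=0}^{h-1} (q^t + q^(t-1)/(h-1)²)^i ≤ (q^((h-1)t+1) - 1)/(q - 1). -/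
/-!
Write `a = q^t + q^(t-1)/(h-1)² = q^t (1 + ε)` with `ε = 1/(q (h-1)²)`. For `i ≤ h - 1` the
perturbation is tiny: `(1 + ε)^i ≤ 1 + 2iε ≤ 1 + 1/q`, so `a^i ≤ q^(ti) + q^(ti-1)`. Since `t ≥ 2`,
the exponents `ti` and `ti - 1` for `1 ≤ i ≤ h - 1` are distinct and at most `(h-1)t`, so the sum
of these bounds is dominated by the geometric sum `Σ_{j ≤ (h-1)t} q^j`.
-/

lemma one_add_pow_le_one_add_two_mul {ε : ℝ} (hε : 0 ≤ ε) {n : ℕ} (hn : 2 * n * ε ≤ 1) :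
    (1 + ε) ^ n ≤ 1 + 2 * n * ε := by
  induction n with
  | zero => simp
  | succ n ih =>
    push_cast at hn ⊢
    have ih' := ih (by nlinarith)
    calc (1 + ε) ^ (n + 1) = (1 + ε) ^ n * (1 + ε) := pow_succ _ _
      _ ≤ (1 + 2 * n * ε) * (1 + ε) := by gcongr
      _ ≤ 1 + 2 * (n + 1) * ε := by nlinarith

lemma pow_add_pow_pred_div_sq_pow_le {q m : ℝ} (hq : 1 ≤ q) (hm : 2 ≤ m) {t i : ℕ}
    (ht : 1 ≤ t) (hi : 1 ≤ i) (him : i ≤ m) :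
    (q ^ t + q ^ (t - 1) / m ^ 2) ^ i ≤ q ^ (t * i) + q ^ (t * i - 1) := by
  have hq0 : 0 < q := by linarith
  set ε := 1 / (q * m ^ 2)
  have hε : 0 ≤ ε := by positivity
  have hsplit : q ^ t + q ^ (t - 1) / m ^ 2 = q ^ t * (1 + ε) := by
    rw [← pow_sub_one_mul (by omega : t ≠ 0)]; simp only [ε]; field_simp
  have hsmall : 2 * i * ε ≤ 1 / q := by
    have hi2 : 2 * (i : ℝ) ≤ m ^ 2 := by nlinarith
    rw [mul_one_div, div_le_div_iff₀ (by positivity) hq0]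
    nlinarith [mul_le_mul_of_nonneg_left hi2 hq0.le]
  calc (q ^ t + q ^ (t - 1) / m ^ 2) ^ i = q ^ (t * i) * (1 + ε) ^ i := by
        rw [hsplit, mul_pow, pow_mul]
    _ ≤ q ^ (t * i) * (1 + 1 / q) := by
        gcongr
        refine (one_add_pow_le_one_add_two_mul hε ?_).trans (by linarith)
        exact hsmall.trans (div_le_one_of_le₀ hq hq0.le)
    _ = q ^ (t * i) + q ^ (t * i - 1) := by
        rw [← pow_sub_one_mul (by positivity : t * i ≠ 0)]; field_simp

lemma pow_add_pow_le_sum_range_pow {q : ℝ} (hq : 0 ≤ q) {t : ℕ} (ht : 2 ≤ t) (n : ℕ) :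
    q ^ (n + t - 1) + q ^ (n + t - 2) ≤ ∑ j ∈ Finset.range t, q ^ (n + j) := by
  obtain ⟨s, rfl⟩ : ∃ s, t = s + 2 := ⟨t - 2, by omega⟩
  simp only [Finset.sum_range_succ, show n + (s + 2) - 1 = n + (s + 1) by omega,
    show n + (s + 2) - 2 = n + s by omega]
  have : 0 ≤ ∑ j ∈ Finset.range s, q ^ (n + j) := by positivity
  linarith

lemma sum_range_le_geom_sum_of_le_pow_add_pow {q : ℝ} (hq : 0 ≤ q) {t : ℕ} (ht : 2 ≤ t)
    {f : ℕ → ℝ} (h₀ : f 0 ≤ 1) {m : ℕ}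
    (hf : ∀ i, 1 ≤ i → i ≤ m → f i ≤ q ^ (t * i) + q ^ (t * i - 1)) :
    ∑ i ∈ Finset.range (m + 1), f i ≤ ∑ j ∈ Finset.range (m * t + 1), q ^ j := by
  induction m with
  | zero => simpa using h₀
  | succ k ih =>
    have hblock := pow_add_pow_le_sum_range_pow hq ht (k * t + 1)
    rw [Finset.sum_range_succ, show (k + 1) * t + 1 = k * t + 1 + t by ring,
      Finset.sum_range_add _ (k * t + 1) t]
    have hlast := hf (k + 1) (by omega) le_rfl
    rw [show t * (k + 1) = k * t + 1 + t - 1 by grind,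
      show k * t + 1 + t - 1 - 1 = k * t + 1 + t - 2 by omega] at hlast
    linarith [ih fun i hi hik => hf i hi (by omega)]

/-- For real `q ≥ 2` and integers `h ≥ 3`, `t ≥ 2`:
`Σ_{i=0}^{h-1} (q^t + q^(t-1)/(h-1)²)^i ≤ (q^((h-1)t+1) - 1)/(q - 1)`. -/
theorem stmt_11 (q : ℝ) (hq : 2 ≤ q) (h t : ℕ) (hh : 3 ≤ h) (ht : 2 ≤ t) :
    ∑ i ∈ Finset.range h, (q ^ t + q ^ (t - 1) / ((h : ℝ) - 1) ^ 2) ^ i ≤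
      (q ^ ((h - 1) * t + 1) - 1) / (q - 1) := by
  obtain ⟨m, rfl⟩ : ∃ m, h = m + 1 := ⟨h - 1, by omega⟩
  have hm : (2 : ℝ) ≤ m := by exact_mod_cast (by omega : 2 ≤ m)
  rw [← geom_sum_eq (by linarith : q ≠ 1), Nat.add_sub_cancel, Nat.cast_succ, add_sub_cancel_right]
  refine sum_range_le_geom_sum_of_le_pow_add_pow (by linarith) ht (by simp) fun i hi him => ?_
  exact pow_add_pow_pred_div_sq_pow_le (by linarith) hm (by omega) hi (by exact_mod_cast him)
end

section
/- Let q ≥ 2 be an integer (a prime power in the paper), and let h ≥ 3 and t be integers with t ≥ h. If x is a real number with x ≥ 0 and Σ_{i=0}^{h-1} x^i ≥ (q^((h-1)t+1) - 1)/(q - 1), then x ≥ q^t + q^(t-1)/(h-1). -/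
/-!
Write `M = h - 1` and `y = q^t (1 + 1/(qM))`, the claimed lower bound. Since `(1+a)^n ≤ e^{na}`
and `e^ε ≤ 1 + ε + ε²` for `ε ≤ 1`, each power `y^n` with `1 ≤ n ≤ M` is at most
`q^{tn} + q^{tn-1} + q^{tn-2}`. For `t ≥ 3` these triples of exponents are pairwise disjoint
and lie in `[1, Mt]`, so `Σ_{n ≤ M} y^n ≤ Σ_{j ≤ Mt} q^j = (q^{Mt+1} - 1)/(q - 1)`.
As `x ↦ Σ_{n ≤ M} x^n` is strictly increasing on `[0, ∞)`, the hypothesis forces `x ≥ y`.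
-/

open Finset

lemma one_add_pow_le_one_add_add_sq {a ε : ℝ} {n : ℕ} (ha : 0 ≤ a) (hna : n * a ≤ ε)
    (hε : ε ≤ 1) : (1 + a) ^ n ≤ 1 + ε + ε ^ 2 := by
  have hε₀ : 0 ≤ ε := le_trans (by positivity) hna
  calc (1 + a) ^ n ≤ Real.exp a ^ n := by
        gcongr; linarith [Real.add_one_le_exp a]
    _ = Real.exp (n * a) := (Real.exp_nat_mul a n).symm
    _ ≤ Real.exp ε := Real.exp_le_exp.mpr hna
    _ ≤ 1 + ε + ε ^ 2 := by
        have := Real.abs_exp_sub_one_sub_id_le (abs_le.mpr ⟨by linarith, hε⟩)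
        linarith [le_abs_self (Real.exp ε - 1 - ε)]

lemma mul_one_add_one_div_pow_le {c : ℝ} (hc : 1 ≤ c) (t : ℕ) {n M : ℕ} (hn : n ≤ M) :
    (c ^ t * (1 + 1 / (c * M))) ^ n ≤ c ^ (t * n) * (1 + c⁻¹ + c⁻¹ ^ 2) := by
  have hc₀ : 0 < c := by linarith
  have hna : n * (1 / (c * M)) ≤ c⁻¹ := by
    rcases Nat.eq_zero_or_pos M with rfl | hM
    · simpa using hc₀.le
    rw [mul_one_div, div_le_iff₀ (by positivity), inv_mul_eq_div, le_div_iff₀ hc₀]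
    nlinarith [(Nat.cast_le (α := ℝ)).mpr hn]
  rw [mul_pow, ← pow_mul]
  gcongr
  exact one_add_pow_le_one_add_add_sq (by positivity) hna (inv_le_one_of_one_le₀ hc)

lemma one_add_sum_pow_mul_le_geom_sum {c : ℝ} (hc : 0 < c) {t : ℕ} (ht : 3 ≤ t) (m : ℕ) :
    1 + ∑ k ∈ range m, c ^ (t * (k + 1)) * (1 + c⁻¹ + c⁻¹ ^ 2) ≤
      ∑ j ∈ range (m * t + 1), c ^ j := by
  obtain ⟨s, rfl⟩ : ∃ s, t = s + 3 := ⟨t - 3, by omega⟩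
  induction m with
  | zero => simp
  | succ m ih =>
    have hblock : c ^ ((s + 3) * (m + 1)) * (1 + c⁻¹ + c⁻¹ ^ 2) ≤
        ∑ i ∈ range (s + 3), c ^ (m * (s + 3) + 1 + i) := by
      simp only [sum_range_succ]
      have hrest : 0 ≤ ∑ i ∈ range s, c ^ (m * (s + 3) + 1 + i) := by positivity
      have hsplit : c ^ ((s + 3) * (m + 1)) * (1 + c⁻¹ + c⁻¹ ^ 2) =
          c ^ (m * (s + 3) + 1 + s) + c ^ (m * (s + 3) + 1 + (s + 1)) +
            c ^ (m * (s + 3) + 1 + (s + 2)) := by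
        rw [show (s + 3) * (m + 1) = m * (s + 3) + 1 + s + 2 by ring]
        simp only [pow_add]
        field_simp
        ring
      linarith
    rw [sum_range_succ, show (m + 1) * (s + 3) + 1 = m * (s + 3) + 1 + (s + 3) by ring,
      sum_range_add]
    linarith

lemma sum_range_pow_lt_sum_range_pow {x y : ℝ} (hx : 0 ≤ x) (hxy : x < y) {n : ℕ}
    (hn : 2 ≤ n) : ∑ i ∈ range n, x ^ i < ∑ i ∈ range n, y ^ i :=
  sum_lt_sum (fun i _ => pow_le_pow_left₀ hx hxy.le i)
    ⟨1, mem_range.mpr hn, by simpa using hxy⟩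

/-- Arithmetic core of the scalar lower bound for `t ≥ h`: if `q ≥ 2` is an integer,
`h ≥ 3`, `t ≥ h`, and `x ≥ 0` is a real with `Σ_{i=0}^{h-1} x^i ≥ (q^((h-1)t+1)-1)/(q-1)`,
then `x ≥ q^t + q^(t-1)/(h-1)`. -/
theorem stmt_12 (q : ℕ) (hq : 2 ≤ q) (h t : ℕ) (hh : 3 ≤ h) (ht : h ≤ t)
    (x : ℝ) (hx : 0 ≤ x)
    (hsum : ((q : ℝ) ^ ((h - 1) * t + 1) - 1) / ((q : ℝ) - 1) ≤
      ∑ i ∈ Finset.range h, x ^ i) :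
    (q : ℝ) ^ t + (q : ℝ) ^ (t - 1) / ((h : ℝ) - 1) ≤ x := by
  have hq₁ : (1 : ℝ) < q := by exact_mod_cast hq
  obtain ⟨M, rfl⟩ : ∃ M, h = M + 1 := ⟨h - 1, by omega⟩
  have hM : (0 : ℝ) < M := by exact_mod_cast (by omega : 0 < M)
  have hy : (q : ℝ) ^ t + (q : ℝ) ^ (t - 1) / (((M + 1 : ℕ) : ℝ) - 1) =
      (q : ℝ) ^ t * (1 + 1 / (q * M)) := by
    obtain ⟨s, rfl⟩ : ∃ s, t = s + 1 := ⟨t - 1, by omega⟩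
    push_cast
    field_simp [hM.ne']
    ring
  rw [Nat.add_sub_cancel, ← geom_sum_eq hq₁.ne'] at hsum
  have hbound : ∑ i ∈ range (M + 1), ((q : ℝ) ^ t * (1 + 1 / (q * M))) ^ i ≤
      ∑ j ∈ range (M * t + 1), (q : ℝ) ^ j := by
    rw [sum_range_succ', pow_zero, add_comm]
    refine le_trans ?_ (one_add_sum_pow_mul_le_geom_sum (by linarith) (by omega) M)
    gcongr with k hk
    exact mul_one_add_one_div_pow_le hq₁.le t (mem_range.mp hk)
  rw [hy]
  by_contra! hlt
  linarith [sum_range_pow_lt_sum_range_pow hx hlt (by omega : 2 ≤ M + 1)]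
end
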